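/- Let w1, w2 be even integers ≥ 2. A polynomial P ∈ V_{w1,w2}^ℚ satisfies ((1+S),1)·P = 0, ((1+U+U²),1)·P = 0 and (1,(1−T))·P = 0 if and only if P is of the form P(X1,X2) = P1(X1) for some P1 ∈ W_{w1}^ℚ (i.e. P is constant in X2 and its X1-part lies in W_{w1}^ℚ). -/
import Mathlib


open MvPolynomial

/-- `SL(2, ℤ)`. -/
abbrev SL2Z := Matrix.SpecialLinearGroup (Fin 2) ℤ

/-- `S = [[0,-1],[1,0]]`. -/
def matS : SL2Z := ⟨!![0, -1; 1, 0], by norm_num [Matrix.det_fin_two_of]⟩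

/-- `U = [[0,1],[-1,1]]`. -/
def matU : SL2Z := ⟨!![0, 1; -1, 1], by norm_num [Matrix.det_fin_two_of]⟩

/-- `T = [[1,1],[0,1]]`. -/
def matT : SL2Z := ⟨!![1, 1; 0, 1], by norm_num [Matrix.det_fin_two_of]⟩

/-- The weight-`w` action of `γ = [[a,b],[c,d]] ∈ SL(2,ℤ)` on a one-variable polynomial of
degree ≤ w : `(γ·Q)(X) = (-cX+a)^w Q((dX-b)/(-cX+a))`, written coefficientwise. -/
noncomputable def polyAct1 {R : Type*} [CommRing R] (w : ℕ) (γ : SL2Z) (Q : Polynomial R) :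
    Polynomial R :=
  ∑ m ∈ Finset.range (w + 1),
    Polynomial.C (Q.coeff m) *
      (Polynomial.C ((γ.1 1 1 : ℤ) : R) * Polynomial.X - Polynomial.C ((γ.1 0 1 : ℤ) : R)) ^ m *
      (Polynomial.C (-((γ.1 1 0 : ℤ) : R)) * Polynomial.X + Polynomial.C ((γ.1 0 0 : ℤ) : R)) ^
        (w - m)

/-- `((dX-b)^m) * ((-cX+a)^n)` for `γ = [[a,b],[c,d]]`, in the variable `x`. -/
noncomputable def mfrac {R : Type*} [CommRing R] (γ : SL2Z) (x : MvPolynomial (Fin 2) R)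
    (m n : ℕ) : MvPolynomial (Fin 2) R :=
  (MvPolynomial.C ((γ.1 1 1 : ℤ) : R) * x - MvPolynomial.C ((γ.1 0 1 : ℤ) : R)) ^ m *
    (MvPolynomial.C (-((γ.1 1 0 : ℤ) : R)) * x + MvPolynomial.C ((γ.1 0 0 : ℤ) : R)) ^ n

/-- The action of a pair `(γ1, γ2) ∈ SL(2,ℤ)²` on polynomials in `X1 = X 0`, `X2 = X 1` of
degree ≤ w1 in `X1` and ≤ w2 in `X2`: the weight-`w1` action on `X1` via `γ1` and the
weight-`w2` action on `X2` via `γ2`. -/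
noncomputable def polyAct2 {R : Type*} [CommRing R] (w1 w2 : ℕ) (γ1 γ2 : SL2Z)
    (P : MvPolynomial (Fin 2) R) : MvPolynomial (Fin 2) R :=
  ∑ m1 ∈ Finset.range (w1 + 1), ∑ m2 ∈ Finset.range (w2 + 1),
    MvPolynomial.C (MvPolynomial.coeff (Finsupp.single 0 m1 + Finsupp.single 1 m2) P) *
      mfrac γ1 (MvPolynomial.X 0) m1 (w1 - m1) * mfrac γ2 (MvPolynomial.X 1) m2 (w2 - m2)

/-- Membership in `V_w^ℚ` : degree at most `w`. -/
def MemV1 (w : ℕ) (P : Polynomial ℚ) : Prop := P.natDegree ≤ w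

/-- Membership in `W_w^ℚ = {P ∈ V_w^ℚ : (1+S)·P = 0, (1+U+U²)·P = 0}`. -/
def MemW1 (w : ℕ) (P : Polynomial ℚ) : Prop :=
  MemV1 w P ∧ P + polyAct1 w matS P = 0 ∧
    P + polyAct1 w matU P + polyAct1 w (matU ^ 2) P = 0

/-- Membership in `V_{w1,w2}^ℚ` : degree ≤ w1 in `X1 = X 0` and ≤ w2 in `X2 = X 1`. -/
def MemV2 (w1 w2 : ℕ) (P : MvPolynomial (Fin 2) ℚ) : Prop :=
  MvPolynomial.degreeOf 0 P ≤ w1 ∧ MvPolynomial.degreeOf 1 P ≤ w2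

/-- The embedding `P1(X) ↦ P1(X1)` of one-variable polynomials in the variable `X1 = X 0`. -/
noncomputable def toX1 (P1 : Polynomial ℚ) : MvPolynomial (Fin 2) ℚ :=
  Polynomial.aeval (MvPolynomial.X 0 : MvPolynomial (Fin 2) ℚ) P1

namespace AuxAnn

lemma fin2_eq (d : Fin 2 →₀ ℕ) : d = Finsupp.single 0 (d 0) + Finsupp.single 1 (d 1) := by
  ext i
  fin_cases i <;> simp [Finsupp.single_apply]

lemma eq_single_iff (d : Fin 2 →₀ ℕ) (m1 m2 : ℕ) :
    d = Finsupp.single 0 m1 + Finsupp.single 1 m2 ↔ d 0 = m1 ∧ d 1 = m2 := by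
  constructor
  · rintro rfl
    constructor <;> simp [Finsupp.single_apply]
  · rintro ⟨h1, h2⟩
    rw [fin2_eq d, h1, h2]

lemma CXX_eq_monomial (a : ℚ) (m1 m2 : ℕ) :
    (C a * X 0 ^ m1 * X 1 ^ m2 : MvPolynomial (Fin 2) ℚ) =
      monomial (Finsupp.single 0 m1 + Finsupp.single 1 m2) a := by
  rw [X_pow_eq_monomial, X_pow_eq_monomial, C_mul_monomial, monomial_mul]
  ring_nf

lemma coeff_CXX (a : ℚ) (m1 m2 : ℕ) (d : Fin 2 →₀ ℕ) :
    MvPolynomial.coeff d (C a * X 0 ^ m1 * X 1 ^ m2 : MvPolynomial (Fin 2) ℚ) =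
      if d 0 = m1 ∧ d 1 = m2 then a else 0 := by
  rw [CXX_eq_monomial, coeff_monomial]
  by_cases h : d 0 = m1 ∧ d 1 = m2
  · rw [if_pos h, if_pos (((eq_single_iff d m1 m2).mpr h).symm)]
  · rw [if_neg h, if_neg (fun hs => h ((eq_single_iff d m1 m2).mp hs.symm))]

lemma coeff_zero_of_deg {w1 w2 : ℕ} {P : MvPolynomial (Fin 2) ℚ}
    (h1 : degreeOf 0 P ≤ w1) (h2 : degreeOf 1 P ≤ w2) {d : Fin 2 →₀ ℕ}
    (h : w1 < d 0 ∨ w2 < d 1) : coeff d P = 0 := by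
  by_contra hc
  have hd : d ∈ P.support := mem_support_iff.mpr hc
  rcases h with h | h
  · have h3 : d 0 ≤ degreeOf 0 P := by
      rw [degreeOf_eq_sup]; exact Finset.le_sup (f := fun m => m 0) hd
    omega
  · have h3 : d 1 ≤ degreeOf 1 P := by
      rw [degreeOf_eq_sup]; exact Finset.le_sup (f := fun m => m 1) hd
    omega

lemma expand {w1 w2 : ℕ} {P : MvPolynomial (Fin 2) ℚ}
    (h1 : degreeOf 0 P ≤ w1) (h2 : degreeOf 1 P ≤ w2) :
    P = ∑ m1 ∈ Finset.range (w1 + 1), ∑ m2 ∈ Finset.range (w2 + 1),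
      C (coeff (Finsupp.single 0 m1 + Finsupp.single 1 m2) P) * X 0 ^ m1 * X 1 ^ m2 := by
  apply MvPolynomial.ext
  intro d
  simp only [coeff_sum, coeff_CXX]
  rw [Finset.sum_comm]
  simp only [ite_and]
  by_cases hd0 : d 0 < w1 + 1
  · by_cases hd1 : d 1 < w2 + 1
    · simp only [Finset.sum_ite_eq, Finset.mem_range, hd0, hd1, if_true]
      conv_lhs => rw [fin2_eq d]
    · rw [coeff_zero_of_deg h1 h2 (Or.inr (by omega))]
      symm
      refine Finset.sum_eq_zero fun m2 hm2 => Finset.sum_eq_zero fun m1 hm1 => ?_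
      rw [Finset.mem_range] at hm2
      split_ifs with ha hb
      · omega
      · rfl
      · rfl
  · rw [coeff_zero_of_deg h1 h2 (Or.inl (by omega))]
    symm
    refine Finset.sum_eq_zero fun m2 hm2 => Finset.sum_eq_zero fun m1 hm1 => ?_
    rw [Finset.mem_range] at hm1
    split_ifs with ha hb
    · omega
    · rfl
    · rfl

lemma mfrac_one (x : MvPolynomial (Fin 2) ℚ) (m n : ℕ) : mfrac 1 x m n = x ^ m := by
  unfold mfrac
  rw [show ((1:SL2Z)).1 1 1 = 1 from rfl, show ((1:SL2Z)).1 0 1 = 0 from rfl,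
    show ((1:SL2Z)).1 1 0 = 0 from rfl, show ((1:SL2Z)).1 0 0 = 1 from rfl]
  push_cast
  simp

lemma mfrac_T (x : MvPolynomial (Fin 2) ℚ) (m n : ℕ) : mfrac matT x m n = (x - 1) ^ m := by
  unfold mfrac
  rw [show matT.1 1 1 = 1 from rfl, show matT.1 0 1 = 1 from rfl,
    show matT.1 1 0 = 0 from rfl, show matT.1 0 0 = 1 from rfl]
  push_cast
  simp

lemma toX1_eq_sum {w : ℕ} {Q : Polynomial ℚ} (h : Q.natDegree ≤ w) :
    toX1 Q = ∑ m1 ∈ Finset.range (w + 1), C (Q.coeff m1) * X 0 ^ m1 := by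
  rw [toX1, Polynomial.aeval_eq_sum_range' (Nat.lt_succ_of_le h)]
  refine Finset.sum_congr rfl fun i _ => ?_
  rw [smul_eq_C_mul]

lemma coeff_toX1 (Q : Polynomial ℚ) (m1 m2 : ℕ) :
    coeff (Finsupp.single 0 m1 + Finsupp.single 1 m2) (toX1 Q) =
      if m2 = 0 then Q.coeff m1 else 0 := by
  have hs := (eq_single_iff (Finsupp.single 0 m1 + Finsupp.single 1 m2) m1 m2).mp rfl
  rw [toX1, Polynomial.aeval_eq_sum_range (X 0)]
  rw [coeff_sum]
  have hterm : ∀ i : ℕ, coeff (Finsupp.single 0 m1 + Finsupp.single 1 m2)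
      (Q.coeff i • (X 0 : MvPolynomial (Fin 2) ℚ) ^ i) =
      if m1 = i ∧ m2 = 0 then Q.coeff i else 0 := by
    intro i
    rw [smul_eq_C_mul, show (C (Q.coeff i) * X 0 ^ i : MvPolynomial (Fin 2) ℚ) =
      C (Q.coeff i) * X 0 ^ i * X 1 ^ 0 by ring, coeff_CXX, hs.1, hs.2]
  simp only [hterm, ite_and]
  by_cases hm2 : m2 = 0
  · simp only [hm2, if_true]
    rw [Finset.sum_ite_eq]
    split_ifs with h
    · rfl
    · rw [Finset.mem_range, not_lt] at h
      rw [eq_comm]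
      exact Polynomial.coeff_eq_zero_of_natDegree_lt (by omega)
  · simp [hm2]

lemma coeff_toX1' (Q : Polynomial ℚ) (k : ℕ) :
    coeff (Finsupp.single 0 k) (toX1 Q) = Q.coeff k := by
  have := coeff_toX1 Q k 0
  simpa using this

lemma toX1_add (p q : Polynomial ℚ) : toX1 (p + q) = toX1 p + toX1 q := by
  unfold toX1; exact map_add _ _ _

lemma toX1_zero : toX1 0 = 0 := by unfold toX1; exact map_zero _

noncomputable def rho : MvPolynomial (Fin 2) ℚ →ₐ[ℚ] Polynomial ℚ :=
  aeval ![Polynomial.X, 0]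

lemma rho_toX1 (s : Polynomial ℚ) : rho (toX1 s) = s := by
  rw [toX1, ← Polynomial.aeval_algHom_apply]
  simp [rho]

lemma act2_left (w1 w2 : ℕ) (γ : SL2Z) (Q : Polynomial ℚ) :
    polyAct2 w1 w2 γ 1 (toX1 Q) = toX1 (polyAct1 w1 γ Q) := by
  unfold polyAct2
  have h1 : ∀ m1 ∈ Finset.range (w1 + 1), ∑ m2 ∈ Finset.range (w2 + 1),
      C (coeff (Finsupp.single 0 m1 + Finsupp.single 1 m2) (toX1 Q)) *
        mfrac γ (X 0) m1 (w1 - m1) * mfrac 1 (X 1) m2 (w2 - m2)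
      = C (Q.coeff m1) * mfrac γ (X 0) m1 (w1 - m1) := by
    intro m1 _
    rw [Finset.sum_eq_single 0]
    · rw [coeff_toX1, mfrac_one]
      simp
    · intro m2 _ hm2
      rw [coeff_toX1]
      simp [hm2]
    · intro h
      exact absurd (Finset.mem_range.mpr (Nat.succ_pos w2)) h
  rw [Finset.sum_congr rfl h1]
  unfold toX1 polyAct1
  rw [map_sum]
  refine Finset.sum_congr rfl fun m1 _ => ?_
  unfold mfrac
  simp only [map_mul, map_pow, map_sub, map_add, Polynomial.aeval_C, Polynomial.aeval_X,
    MvPolynomial.algebraMap_eq]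
  ring

lemma act2_T_toX1 (w1 w2 : ℕ) {Q : Polynomial ℚ} (h : Q.natDegree ≤ w1) :
    polyAct2 w1 w2 1 matT (toX1 Q) = toX1 Q := by
  unfold polyAct2
  have h1 : ∀ m1 ∈ Finset.range (w1 + 1), ∑ m2 ∈ Finset.range (w2 + 1),
      C (coeff (Finsupp.single 0 m1 + Finsupp.single 1 m2) (toX1 Q)) *
        mfrac 1 (X 0) m1 (w1 - m1) * mfrac matT (X 1) m2 (w2 - m2)
      = C (Q.coeff m1) * X 0 ^ m1 := by
    intro m1 _
    rw [Finset.sum_eq_single 0]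
    · rw [coeff_toX1, mfrac_one, mfrac_T]
      simp
    · intro m2 _ hm2
      rw [coeff_toX1]
      simp [hm2]
    · intro h
      exact absurd (Finset.mem_range.mpr (Nat.succ_pos w2)) h
  rw [Finset.sum_congr rfl h1, ← toX1_eq_sum h]

lemma act2_T {w1 w2 : ℕ} {P : MvPolynomial (Fin 2) ℚ}
    (h1 : degreeOf 0 P ≤ w1) (h2 : degreeOf 1 P ≤ w2) :
    polyAct2 w1 w2 1 matT P = aeval ![X 0, X 1 - 1] P := by
  conv_rhs => rw [expand h1 h2]
  rw [map_sum]
  unfold polyAct2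
  refine Finset.sum_congr rfl fun m1 _ => ?_
  rw [map_sum]
  refine Finset.sum_congr rfl fun m2 _ => ?_
  rw [mfrac_one, mfrac_T]
  simp only [map_mul, map_pow, aeval_C, aeval_X, Matrix.cons_val_zero, Matrix.cons_val_one,
    Matrix.head_cons, MvPolynomial.algebraMap_eq]

noncomputable def Theta : MvPolynomial (Fin 2) ℚ →ₐ[ℚ] Polynomial (Polynomial ℚ) :=
  aeval ![Polynomial.C Polynomial.X, Polynomial.X]

noncomputable def Xi : Polynomial (Polynomial ℚ) →+* MvPolynomial (Fin 2) ℚ :=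
  Polynomial.eval₂RingHom (Polynomial.aeval (X 0 : MvPolynomial (Fin 2) ℚ)).toRingHom (X 1)

lemma Xi_Theta (P : MvPolynomial (Fin 2) ℚ) : Xi (Theta P) = P := by
  have h : (Xi.comp (Theta.toRingHom)) = RingHom.id _ := by
    apply MvPolynomial.ringHom_ext
    · intro a
      simp [Theta, Xi, MvPolynomial.algebraMap_eq]
    · intro i
      fin_cases i <;> simp [Theta, Xi]
  exact RingHom.congr_fun h P

noncomputable def Bshift : Polynomial (Polynomial ℚ) →+* Polynomial (Polynomial ℚ) :=
  Polynomial.eval₂RingHom Polynomial.C (Polynomial.X - Polynomial.C 1)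

lemma Bshift_apply (q : Polynomial (Polynomial ℚ)) :
    Bshift q = q.comp (Polynomial.X - Polynomial.C 1) := rfl

lemma Theta_shift (P : MvPolynomial (Fin 2) ℚ) :
    Theta (aeval ![X 0, X 1 - 1] P) = Bshift (Theta P) := by
  have h : (Bshift.comp Theta.toRingHom) =
      (Theta.toRingHom.comp (aeval (R := ℚ) ![X 0, X 1 - 1]).toRingHom) := by
    apply MvPolynomial.ringHom_ext
    · intro a
      simp [Theta, Bshift, MvPolynomial.algebraMap_eq]
    · intro i
      fin_cases i <;> simp [Theta, Bshift]
  exact (RingHom.congr_fun h P).symm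

lemma comp_aux : ∀ n (g : Polynomial (Polynomial ℚ)), g.natDegree ≤ n →
    g.comp (Polynomial.X - Polynomial.C 1) = g → g.natDegree = 0 := by
  intro n
  induction n with
  | zero => intro g h _; omega
  | succ n ih =>
    intro g hg hcomp
    by_cases h0 : g.natDegree = 0
    · exact h0
    · have hd : (Polynomial.derivative g).comp (Polynomial.X - Polynomial.C 1) =
          Polynomial.derivative g := by
        conv_rhs => rw [← hcomp]
        rw [Polynomial.derivative_comp]
        simp
      have hlt := Polynomial.natDegree_derivative_lt h0
      have h1 : (Polynomial.derivative g).natDegree = 0 := ih _ (by omega) hd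
      set a := (Polynomial.derivative g).coeff 0 with ha
      have hda : Polynomial.derivative g = Polynomial.C a :=
        Polynomial.eq_C_of_natDegree_eq_zero h1
      have h2 : Polynomial.derivative (g - Polynomial.C a * Polynomial.X) = 0 := by
        simp [hda]
      have h3 : (g - Polynomial.C a * Polynomial.X).natDegree = 0 :=
        Polynomial.natDegree_eq_zero_of_derivative_eq_zero h2
      have h4 : g = Polynomial.C ((g - Polynomial.C a * Polynomial.X).coeff 0) +
          Polynomial.C a * Polynomial.X := by
        have h5 := Polynomial.eq_C_of_natDegree_eq_zero h3
        linear_combination h5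
      rw [h4] at hcomp
      simp only [Polynomial.add_comp, Polynomial.mul_comp, Polynomial.C_comp,
        Polynomial.X_comp] at hcomp
      have h5 : (Polynomial.C a : Polynomial (Polynomial ℚ)) = 0 := by
        have h5' := add_left_cancel hcomp
        have h6 := sub_eq_zero.mpr h5'.symm
        rwa [mul_sub, sub_sub_cancel, Polynomial.C_1, mul_one] at h6
      have h6 : a = 0 := by
        exact_mod_cast Polynomial.C_eq_zero.mp h5
      rw [h4, h6]
      simp

end AuxAnn

open AuxAnn

/-- A polynomial `P ∈ V_{w1,w2}^ℚ` is killed by `((1+S),1)`, `((1+U+U²),1)` and `(1,(1-T))`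
iff it equals `P1(X1)` for some `P1 ∈ W_{w1}^ℚ`. -/
theorem annihilator_IH_eq_W_otimes_one (w1 w2 : ℕ) (hw1 : Even w1) (hw2 : Even w2)
    (hw1' : 2 ≤ w1) (hw2' : 2 ≤ w2) (P : MvPolynomial (Fin 2) ℚ) (hP : MemV2 w1 w2 P) :
    (P + polyAct2 w1 w2 matS 1 P = 0 ∧
     P + polyAct2 w1 w2 matU 1 P + polyAct2 w1 w2 (matU ^ 2) 1 P = 0 ∧
     P - polyAct2 w1 w2 1 matT P = 0) ↔
    ∃ P1 : Polynomial ℚ, MemW1 w1 P1 ∧ P = toX1 P1 := by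
  obtain ⟨hd1, hd2⟩ := hP
  constructor
  · rintro ⟨c1, c2, c3⟩
    have hPT : P = aeval ![X 0, X 1 - 1] P := by
      rw [← act2_T hd1 hd2]
      exact eq_of_sub_eq_zero c3
    have hg : (Theta P).comp (Polynomial.X - Polynomial.C 1) = Theta P := by
      conv_rhs => rw [hPT]
      rw [Theta_shift, Bshift_apply]
    have hdeg : (Theta P).natDegree = 0 := comp_aux _ (Theta P) le_rfl hg
    set r := (Theta P).coeff 0 with hr
    have hgr : Theta P = Polynomial.C r := Polynomial.eq_C_of_natDegree_eq_zero hdeg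
    have hPr : P = toX1 r := by
      have h := Xi_Theta P
      rw [hgr] at h
      rw [← h]
      simp [Xi, toX1]
    have hret : ∀ s : Polynomial ℚ, toX1 s = 0 → s = 0 := by
      intro s hs
      have := congrArg rho hs
      rwa [rho_toX1, map_zero] at this
    refine ⟨r, ⟨?_, ?_, ?_⟩, hPr⟩
    · refine Polynomial.natDegree_le_iff_coeff_eq_zero.mpr fun N hN => ?_
      have h := coeff_toX1' r N
      rw [← hPr] at h
      rw [← h]
      apply coeff_zero_of_deg hd1 hd2
      left
      simpa using hN
    · apply hret
      rw [toX1_add, ← act2_left w1 w2 matS r, ← hPr]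
      exact c1
    · apply hret
      rw [toX1_add, toX1_add, ← act2_left w1 w2 matU r, ← act2_left w1 w2 (matU ^ 2) r, ← hPr]
      exact c2
  · rintro ⟨P1, ⟨hV, hS, hU⟩, rfl⟩
    refine ⟨?_, ?_, ?_⟩
    · rw [act2_left, ← toX1_add, hS, toX1_zero]
    · rw [act2_left, act2_left, ← toX1_add, ← toX1_add, hU, toX1_zero]
    · rw [act2_T_toX1 w1 w2 hV, sub_self]
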